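/- arXiv:2310.08239 — 3 statements merged into one kernel-verified Lean document; each statement's English description precedes it below -/
import Mathlib

section
/- If X and Y are real square matrices of size (n+1)×(n+1) satisfying X ⇌ Y, then their adjugate matrices satisfy adj(X) ⇌ adj(Y). -/
/-- `X ⇌ Y`: each of `X`, `Y` is the reverse of the other, i.e.
`xᵢⱼ = y_{m-i, n-j}` for all `i`, `j` (indices starting at `0`). -/
def ReverseRel {m n : ℕ} (X Y : Matrix (Fin m) (Fin n) ℝ) : Prop :=
  ∀ i j, X i j = Y i.rev j.rev

theorem reverseRel_iff_eq_submatrix {m n : ℕ} {X Y : Matrix (Fin m) (Fin n) ℝ} :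
    ReverseRel X Y ↔ X = Y.submatrix Fin.revPerm Fin.revPerm :=
  ⟨Matrix.ext, fun h i j => congrFun₂ h i j⟩

/-- If `X` and `Y` are real square matrices of size `(n+1) × (n+1)` with `X ⇌ Y`,
then `adj X ⇌ adj Y`. -/
theorem adjugate_reverseRel (n : ℕ) (X Y : Matrix (Fin (n + 1)) (Fin (n + 1)) ℝ)
    (h : ReverseRel X Y) : ReverseRel X.adjugate Y.adjugate := by
  rw [reverseRel_iff_eq_submatrix] at h ⊢
  rw [h, Matrix.adjugate_submatrix_equiv_self]
end

section
/- Let P₀, …, Pₙ be a linearly independent family of real polynomials in two variables x, y which is a reflexive polynomial vector, let T = (t_{kj}) be a real (n+1)×(n+1) matrix, and define P̃ₖ = Σ_{j=0}^{n} t_{kj} Pⱼ for k = 0, …, n. Then the family P̃₀, …, P̃ₙ is a reflexive polynomial vector if and only if T is centrosymmetric. -/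
/-!
Since `σ` is linear and reverses the family, `σ(P̃ₖ) = Σⱼ t_{k,n-j} Pⱼ`.  By linear independence
the reflexivity condition `σ(P̃ₖ) = P̃_{n-k}` is therefore equivalent to the coefficient identities
`t_{k,n-j} = t_{n-k,j}`, which is centrosymmetry after substituting `j ↦ n - j`.
-/

open MvPolynomial

/-- The ℝ-algebra automorphism of `ℝ[x,y]` interchanging the two variables. -/
noncomputable def swapVars : MvPolynomial (Fin 2) ℝ →ₐ[ℝ] MvPolynomial (Fin 2) ℝ :=
  MvPolynomial.rename ⇑(Equiv.swap (0 : Fin 2) 1)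

/-- A real matrix `T` is centrosymmetric if `tₖⱼ = t_{n-k, n-j}` for all `k`, `j`
(indices starting at `0`). -/
def Centrosymmetric {m n : ℕ} (T : Matrix (Fin m) (Fin n) ℝ) : Prop :=
  ∀ i j, T i j = T i.rev j.rev

theorem LinearIndependent.sum_smul_eq_sum_smul_iff {ι R M : Type*} [Fintype ι] [Semiring R]
    [AddCommMonoid M] [Module R M] {v : ι → M} (hv : LinearIndependent R v) {f g : ι → R} :
    ∑ i, f i • v i = ∑ i, g i • v i ↔ f = g :=
  ⟨fun h ↦ funext (Fintype.linearIndependent_iffₛ.mp hv f g h), fun h ↦ h ▸ rfl⟩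

theorem map_sum_smul_of_map_eq_rev {R M F : Type*} [Semiring R] [AddCommMonoid M] [Module R M]
    [FunLike F M M] [LinearMapClass F R M M] {m : ℕ} (f : F) {v : Fin m → M}
    (hv : ∀ k, f (v k) = v k.rev) (c : Fin m → R) :
    f (∑ j, c j • v j) = ∑ j, c j.rev • v j := by
  simp only [map_sum, map_smul, hv]
  exact Fintype.sum_equiv Fin.revPerm _ _ fun j ↦ by simp

theorem centrosymmetric_iff_apply_rev_right {m n : ℕ} {T : Matrix (Fin m) (Fin n) ℝ} :
    Centrosymmetric T ↔ ∀ i j, T i j.rev = T i.rev j :=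
  ⟨fun h i j ↦ by rw [h, Fin.rev_rev], fun h i j ↦ by rw [← h, Fin.rev_rev]⟩

/-- Let `P₀, …, Pₙ` be a linearly independent reflexive polynomial vector in `ℝ[x,y]`
(`σ(Pₖ) = P_{n-k}`), let `T` be a real `(n+1) × (n+1)` matrix, and let
`P̃ₖ = Σⱼ tₖⱼ Pⱼ`.  Then `P̃₀, …, P̃ₙ` is a reflexive polynomial vector iff `T` is
centrosymmetric. -/
theorem transformed_reflexive_iff_centrosymmetric (n : ℕ)
    (P : Fin (n + 1) → MvPolynomial (Fin 2) ℝ)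
    (hli : LinearIndependent ℝ P)
    (hrefl : ∀ k, swapVars (P k) = P k.rev)
    (T : Matrix (Fin (n + 1)) (Fin (n + 1)) ℝ) :
    (∀ k : Fin (n + 1),
        swapVars (∑ j, T k j • P j) = ∑ j, T k.rev j • P j) ↔
      Centrosymmetric T := by
  simp only [map_sum_smul_of_map_eq_rev swapVars hrefl, hli.sum_smul_eq_sum_smul_iff,
    funext_iff, centrosymmetric_iff_apply_rev_right]
end

section
/- Let u : ℝ[x,y] → ℝ be a reflexive linear moment functional, and fix n ≥ 0. Suppose that for each k = 0, …, n, Qₖ is a polynomial in ℝ[x,y] such that Qₖ − x^{n−k} y^{k} has total degree at most n−1, u(Qₖ · p) = 0 for every polynomial p of total degree at most n−1, and Qₖ is the unique polynomial with these two properties. Then σ(Qₖ) = Q_{n−k} for all k = 0, …, n; that is, the monic orthogonal polynomial vector (Q₀, …, Qₙ) is reflexive. -/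
open MvPolynomial

/-- `MonicOrth u n k Q` says: `Q - x^(n-k) y^k` has total degree at most `n - 1`
(every monomial of total degree `≥ n` has zero coefficient in `Q - x^(n-k) y^k`),
and `u (Q * p) = 0` for every polynomial `p` of total degree at most `n - 1`. -/
def MonicOrth (u : MvPolynomial (Fin 2) ℝ →ₗ[ℝ] ℝ) (n : ℕ) (k : Fin (n + 1))
    (Q : MvPolynomial (Fin 2) ℝ) : Prop :=
  (∀ d : Fin 2 →₀ ℕ, n ≤ d 0 + d 1 →
      (Q - X 0 ^ (n - (k : ℕ)) * X 1 ^ (k : ℕ)).coeff d = 0) ∧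
  (∀ p : MvPolynomial (Fin 2) ℝ, p.totalDegree < n → u (Q * p) = 0)

/-! σ preserves total degree and, by reflexivity, the functional `u`, while it sends the leading
term `x^(n-k) y^k` to `x^k y^(n-k)`. Hence `σ(Qₖ)` has the defining properties of `Q_{n-k}`, and
uniqueness gives `σ(Qₖ) = Q_{n-k}`. -/

theorem swapVars_involutive : Function.Involutive swapVars :=
  fun p => rename_leftInverse (Equiv.swap_apply_self 0 1) p

theorem swapVars_X_pow_mul_X_pow (a b : ℕ) :
    swapVars ((X 0 : MvPolynomial (Fin 2) ℝ) ^ a * X 1 ^ b) = X 0 ^ b * X 1 ^ a := by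
  simp [swapVars, mul_comm]

theorem coeff_swapVars (p : MvPolynomial (Fin 2) ℝ) (d : Fin 2 →₀ ℕ) :
    (swapVars p).coeff d = p.coeff (d.mapDomain (Equiv.swap 0 1)) := by
  have hd : (d.mapDomain (Equiv.swap 0 1)).mapDomain (Equiv.swap 0 1) = d := by
    rw [← Finsupp.mapDomain_comp, show ⇑(Equiv.swap (0 : Fin 2) 1) ∘ ⇑(Equiv.swap 0 1) = id from
      funext (Equiv.swap_apply_self 0 1), Finsupp.mapDomain_id]
  conv_lhs => rw [← hd]
  exact coeff_rename_mapDomain _ (Equiv.injective _) p _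

theorem LinearMap.apply_swapVars_of_reflexive {M : Type*} [AddCommMonoid M] [Module ℝ M]
    (u : MvPolynomial (Fin 2) ℝ →ₗ[ℝ] M)
    (hu : ∀ a b : ℕ, u (X 0 ^ a * X 1 ^ b) = u (X 0 ^ b * X 1 ^ a))
    (p : MvPolynomial (Fin 2) ℝ) : u (swapVars p) = u p := by
  have hcomp : u ∘ₗ swapVars.toLinearMap = u := by
    refine linearMap_ext fun s => LinearMap.ext_ring ?_
    simp only [LinearMap.comp_apply, AlgHom.toLinearMap_apply]
    rw [monomial_eq, C_1, one_mul,
      Finsupp.prod_fintype _ _ fun _ => pow_zero _, Fin.prod_univ_two, swapVars_X_pow_mul_X_pow]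
    exact hu (s 1) (s 0)
  exact LinearMap.congr_fun hcomp p

theorem MonicOrth.map_swapVars {u : MvPolynomial (Fin 2) ℝ →ₗ[ℝ] ℝ} {n : ℕ} {k : Fin (n + 1)}
    {Q : MvPolynomial (Fin 2) ℝ}
    (hu : ∀ a b : ℕ, u (X 0 ^ a * X 1 ^ b) = u (X 0 ^ b * X 1 ^ a)) (hQ : MonicOrth u n k Q) :
    MonicOrth u n k.rev (swapVars Q) := by
  have hk : (k : ℕ) ≤ n := Nat.lt_succ_iff.mp k.isLt
  have hrev : (k.rev : ℕ) = n - k := by rw [Fin.val_rev]; omega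
  constructor
  · intro d hd
    have hlead : (X 0 : MvPolynomial (Fin 2) ℝ) ^ (n - k.rev) * X 1 ^ (k.rev : ℕ)
        = swapVars (X 0 ^ (n - k) * X 1 ^ (k : ℕ)) := by
      rw [swapVars_X_pow_mul_X_pow, hrev, Nat.sub_sub_self hk]
    rw [hlead, ← map_sub, coeff_swapVars]
    apply hQ.1
    simp only [Finsupp.mapDomain_equiv_apply, Equiv.symm_swap, Equiv.swap_apply_left,
      Equiv.swap_apply_right]
    omega
  · intro p hp
    rw [← swapVars_involutive p, ← map_mul, u.apply_swapVars_of_reflexive hu]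
    exact hQ.2 _ ((totalDegree_rename_le _ p).trans_lt hp)

/-- Let `u` be a reflexive moment functional on `ℝ[x,y]` and suppose, for each
`k = 0, …, n`, that `Qₖ` is the unique monic polynomial with leading term `x^(n-k) y^k`
orthogonal to all polynomials of total degree at most `n-1`.  Then `σ(Qₖ) = Q_{n-k}`
for all `k`, i.e. the monic orthogonal polynomial vector `(Q₀, …, Qₙ)` is reflexive. -/
theorem monic_orthogonal_vector_reflexive (n : ℕ)
    (u : MvPolynomial (Fin 2) ℝ →ₗ[ℝ] ℝ)
    (hu : ∀ a b : ℕ, u (X 0 ^ a * X 1 ^ b) = u (X 0 ^ b * X 1 ^ a))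
    (Q : Fin (n + 1) → MvPolynomial (Fin 2) ℝ)
    (hQ : ∀ k, MonicOrth u n k (Q k))
    (huniq : ∀ k, ∀ q : MvPolynomial (Fin 2) ℝ, MonicOrth u n k q → q = Q k) :
    ∀ k, swapVars (Q k) = Q k.rev := by
  intro k
  exact huniq k.rev _ ((hQ k).map_swapVars hu)
end
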